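/- Let p > 5, γ < 0, ω > 0, and let (α,β) and (α',β') both satisfy α > 0, 2α−β ≥ 0 and 2α+β ≥ 0. Then for every φ ∈ H¹(ℝ) with S_{ω,γ}(φ) < n_ω, one has K^{α,β}_{ω,γ}(φ) ≥ 0 if and only if K^{α',β'}_{ω,γ}(φ) ≥ 0. The same equivalence holds for every even φ ∈ H¹(ℝ) with S_{ω,γ}(φ) < r_ω. -/

import Mathlib

open MeasureTheory Real Filter Topology

/-- `φ : ℝ → ℂ` lies in `H¹(ℝ)`: `φ ∈ L²(ℝ)` together with a weak derivative
`dx ∈ L²(ℝ)` such that `φ x = φ 0 + ∫₀ˣ dx (t) dt` for all `x`. -/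
structure H1 where
  toFun : ℝ → ℂ
  dx : ℝ → ℂ
  memL2 : MemLp toFun 2 (volume : Measure ℝ)
  dx_memL2 : MemLp dx 2 (volume : Measure ℝ)
  eq_int : ∀ x : ℝ, toFun x = toFun 0 + ∫ t in (0:ℝ)..x, dx t

/-- `‖∂ₓφ‖²_{L²}` -/
noncomputable def gradSq (φ : H1) : ℝ := ∫ x : ℝ, ‖φ.dx x‖ ^ 2

/-- `‖φ‖²_{L²}` -/
noncomputable def massSq (φ : H1) : ℝ := ∫ x : ℝ, ‖φ.toFun x‖ ^ 2

/-- `‖φ‖^{p+1}_{L^{p+1}}` -/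
noncomputable def lpPow (p : ℝ) (φ : H1) : ℝ := ∫ x : ℝ, ‖φ.toFun x‖ ^ (p + 1)

/-- The action `S_{ω,μ}(φ) = (1/4)‖∂ₓφ‖²_{L²} − (μ/2)|φ(0)|² + (ω/2)‖φ‖²_{L²}
− (1/(p+1))‖φ‖^{p+1}_{L^{p+1}}`. -/
noncomputable def Sfun (p ω μ : ℝ) (φ : H1) : ℝ :=
  (1/4) * gradSq φ - (μ/2) * ‖φ.toFun 0‖ ^ 2 + (ω/2) * massSq φ - (1/(p+1)) * lpPow p φ

/-- The virial functional `P_μ(φ) = (1/2)‖∂ₓφ‖²_{L²} − (μ/2)|φ(0)|²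
− ((p−1)/(2(p+1)))‖φ‖^{p+1}_{L^{p+1}}`. -/
noncomputable def Pfun (p μ : ℝ) (φ : H1) : ℝ :=
  (1/2) * gradSq φ - (μ/2) * ‖φ.toFun 0‖ ^ 2 - ((p-1)/(2*(p+1))) * lpPow p φ

/-- The Nehari functional `I_{ω,γ}(φ) = (1/2)‖∂ₓφ‖²_{L²} − γ|φ(0)|² + ω‖φ‖²_{L²}
− ‖φ‖^{p+1}_{L^{p+1}}`. -/
noncomputable def Ifun (p ω γ : ℝ) (φ : H1) : ℝ :=
  (1/2) * gradSq φ - γ * ‖φ.toFun 0‖ ^ 2 + ω * massSq φ - lpPow p φ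

/-- `K^{α,β}_{ω,γ}`. -/
noncomputable def Kfun (p ω γ α β : ℝ) (φ : H1) : ℝ :=
  ((2*α-β)/4) * gradSq φ + (ω*(2*α+β)/2) * massSq φ - γ*α*‖φ.toFun 0‖ ^ 2
    - (((p+1)*α+β)/(p+1)) * lpPow p φ

/-- `J^{α,β}_{ω,γ}(φ) = S_{ω,γ}(φ) − K^{α,β}_{ω,γ}(φ)/μ̄` with `μ̄ = max(2α−β, 2α+β)`. -/
noncomputable def Jfun (p ω γ α β : ℝ) (φ : H1) : ℝ :=
  Sfun p ω γ φ - Kfun p ω γ α β φ / max (2*α-β) (2*α+β)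

/-- The mass `M(φ) = (1/2)‖φ‖²_{L²}`. -/
noncomputable def Mfun (φ : H1) : ℝ := (1/2) * massSq φ

/-- The energy `E_μ(φ) = (1/4)‖∂ₓφ‖²_{L²} − (μ/2)|φ(0)|² − (1/(p+1))‖φ‖^{p+1}_{L^{p+1}}`. -/
noncomputable def Efun (p μ : ℝ) (φ : H1) : ℝ :=
  (1/4) * gradSq φ - (μ/2) * ‖φ.toFun 0‖ ^ 2 - (1/(p+1)) * lpPow p φ

/-- `n_ω`: infimum of `S_{ω,γ}` over nonzero `H¹(ℝ)` functions with `P_γ = 0`. -/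
noncomputable def nOmega (p γ ω : ℝ) : ℝ :=
  sInf {s : ℝ | ∃ φ : H1, φ.toFun ≠ 0 ∧ Pfun p γ φ = 0 ∧ Sfun p ω γ φ = s}

/-- `r_ω`: infimum of `S_{ω,γ}` over nonzero even `H¹(ℝ)` functions with `P_γ = 0`. -/
noncomputable def rOmega (p γ ω : ℝ) : ℝ :=
  sInf {s : ℝ | ∃ φ : H1, φ.toFun ≠ 0 ∧ (∀ x, φ.toFun (-x) = φ.toFun x) ∧
    Pfun p γ φ = 0 ∧ Sfun p ω γ φ = s}

/-- `l_ω`: infimum of `S_{ω,0}` over nonzero `H¹(ℝ)` functions with `P_0 = 0`. -/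
noncomputable def lOmega (p ω : ℝ) : ℝ :=
  sInf {s : ℝ | ∃ φ : H1, φ.toFun ≠ 0 ∧ Pfun p 0 φ = 0 ∧ Sfun p ω 0 φ = s}

/-- The inverse hyperbolic tangent. -/
noncomputable def artanh (x : ℝ) : ℝ := (1/2) * Real.log ((1+x)/(1-x))

/-- The standing-wave profile
`Q_{ω,γ}(x) = ( ((p+1)ω/2)·sech²( ((p−1)√ω/√2)|x| + artanh(γ/√(2ω)) ) )^{1/(p−1)}`. -/
noncomputable def Qsol (p γ ω : ℝ) : ℝ → ℝ := fun x =>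
  (((p+1)*ω/2) *
    (1 / Real.cosh (((p-1)*Real.sqrt ω/Real.sqrt 2) * |x| + _root_.artanh (γ / Real.sqrt (2*ω)))) ^ 2)
  ^ (1/(p-1))

/-- The free ground state `Q_{1,0}(x) = ( ((p+1)/2)·sech²( ((p−1)/√2)x ) )^{1/(p−1)}`. -/
noncomputable def Qfree (p : ℝ) : ℝ → ℝ := fun x =>
  (((p+1)/2) * (1 / Real.cosh (((p-1)/Real.sqrt 2) * x)) ^ 2) ^ (1/(p-1))

/-- `‖φ‖²_𝓗 = (1/4)‖∂ₓφ‖²_{L²} + (ω/2)‖φ‖²_{L²} − (γ/2)|φ(0)|²`. -/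
noncomputable def HnormSq (ω γ : ℝ) (φ : H1) : ℝ :=
  (1/4) * gradSq φ + (ω/2) * massSq φ - (γ/2) * ‖φ.toFun 0‖ ^ 2

/-!
If `K^{a,b}(φ) ≥ 0 > K^{a',b'}(φ)`, then, `K` being affine in the pair, some admissible pair
`(A, B)` on the segment between them has `K^{A,B}(φ) = 0`. Under the dilations
`φ_σ = φ(· / σ)` the quantities `‖∂ₓφ‖²`, `‖φ‖²`, `‖φ‖^{p+1}_{p+1}` scale like `σ⁻¹`, `σ`, `σ`
while `φ(0)` is fixed, so `P_γ(φ_σ) = 0` for the positive root `σ` of a quadratic. The two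
relations `K^{A,B}(φ) = 0` and `P_γ(φ_σ) = 0` give
`(2A + B) · 4σ(p + 1) · (S(φ) − S(φ_σ)) = (1 − σ)² · Y` with `Y > 0` (forcing `σ = 1` when
`2A + B = 0`), hence `S(φ_σ) ≤ S(φ)`, which contradicts `S(φ) < n_ω`. The set defining `n_ω`
is bounded below because `(p − 1) S − 2 P_γ ≥ 0` for `p ≥ 5`, `γ ≤ 0`; dilations preserve
evenness, which gives the statement for `r_ω`.
-/

lemma ae_eq_zero_of_integral_sq_norm_eq_zero {α E : Type*} [MeasurableSpace α] {μ : Measure α}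
    [NormedAddCommGroup E] {f : α → E} (hf : MemLp f 2 μ) (h : ∫ x, ‖f x‖ ^ 2 ∂μ = 0) :
    f =ᵐ[μ] 0 := by
  have hint := (memLp_two_iff_integrable_sq_norm hf.1).1 hf
  filter_upwards [(integral_eq_zero_iff_of_nonneg (fun x => by positivity) hint).1 h] with x hx
  simpa using hx

lemma MeasureTheory.MemLp.comp_div {E : Type*} [NormedAddCommGroup E] {q : ENNReal} {f : ℝ → E}
    (hf : MemLp f q volume) {σ : ℝ} (hσ : σ ≠ 0) : MemLp (fun x => f (x / σ)) q volume := by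
  have hσ' : σ⁻¹ ≠ 0 := inv_ne_zero hσ
  have h := hf.smul_measure (c := ENNReal.ofReal |σ⁻¹⁻¹|) ENNReal.ofReal_ne_top
  rw [← Real.map_volume_mul_right hσ'] at h
  simp only [div_eq_mul_inv]
  exact (Homeomorph.mulRight₀ σ⁻¹ hσ').toMeasurableEquiv.memLp_map_measure_iff.1 h

lemma exists_pos_mul_sq_eq_mul_add {a c : ℝ} (ha : 0 < a) (hc : 0 < c) (b : ℝ) :
    ∃ σ > 0, a * σ ^ 2 = b * σ + c := by
  set r := √(b ^ 2 + 4 * a * c)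
  have hr : r ^ 2 = b ^ 2 + 4 * a * c := Real.sq_sqrt (by positivity)
  have hbr : |b| < r := by
    rw [← Real.sqrt_sq_eq_abs]
    exact Real.sqrt_lt_sqrt (sq_nonneg b) (by nlinarith)
  refine ⟨(b + r) / (2 * a), div_pos (by linarith [neg_abs_le b]) (by positivity), ?_⟩
  field_simp
  linear_combination hr

namespace H1

lemma continuous (φ : H1) : Continuous φ.toFun := by
  have hloc : LocallyIntegrable φ.dx volume := φ.dx_memL2.locallyIntegrable (by norm_num)
  rw [funext φ.eq_int]
  exact continuous_const.add <| intervalIntegral.continuous_primitive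
    (fun a b => (hloc.integrableOn_isCompact isCompact_uIcc).intervalIntegrable) 0

lemma eq_of_dx_ae_eq_zero (φ : H1) (h : φ.dx =ᵐ[volume] 0) (x : ℝ) : φ.toFun x = φ.toFun 0 := by
  rw [φ.eq_int x, intervalIntegral.integral_zero_ae (h.mono fun t ht _ => ht), add_zero]

noncomputable def dilate (φ : H1) {σ : ℝ} (hσ : 0 < σ) : H1 where
  toFun x := φ.toFun (x / σ)
  dx x := (σ : ℂ)⁻¹ * φ.dx (x / σ)
  memL2 := φ.memL2.comp_div hσ.ne'
  dx_memL2 := (φ.dx_memL2.comp_div hσ.ne').const_mul _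
  eq_int x := by
    have hσℂ : (σ : ℂ) ≠ 0 := by exact_mod_cast hσ.ne'
    rw [intervalIntegral.integral_const_mul, intervalIntegral.integral_comp_div φ.dx hσ.ne',
      zero_div, Complex.real_smul, inv_mul_cancel_left₀ hσℂ, ← φ.eq_int]

variable {σ : ℝ} (hσ : 0 < σ)

@[simp]
lemma dilate_toFun (φ : H1) (x : ℝ) : (φ.dilate hσ).toFun x = φ.toFun (x / σ) := rfl

lemma dilate_toFun_ne_zero {φ : H1} (hφ : φ.toFun ≠ 0) : (φ.dilate hσ).toFun ≠ 0 := by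
  refine fun h => hφ (funext fun y => ?_)
  simpa [hσ.ne'] using congrFun h (σ * y)

end H1

open H1

lemma gradSq_nonneg (φ : H1) : 0 ≤ gradSq φ := integral_nonneg fun _ => by positivity

lemma massSq_nonneg (φ : H1) : 0 ≤ massSq φ := integral_nonneg fun _ => by positivity

lemma massSq_pos {φ : H1} (hφ : φ.toFun ≠ 0) : 0 < massSq φ :=
  (massSq_nonneg φ).lt_of_ne' fun h => hφ <| (φ.continuous.ae_eq_iff_eq volume continuous_const).1
    (ae_eq_zero_of_integral_sq_norm_eq_zero φ.memL2 h)

lemma gradSq_pos {φ : H1} (hφ : φ.toFun ≠ 0) : 0 < gradSq φ := by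
  refine (gradSq_nonneg φ).lt_of_ne' fun h => hφ ?_
  have hconst : φ.toFun = fun _ => φ.toFun 0 :=
    funext (φ.eq_of_dx_ae_eq_zero (ae_eq_zero_of_integral_sq_norm_eq_zero φ.dx_memL2 h))
  have hmem := φ.memL2
  rw [hconst, memLp_const_iff two_ne_zero ENNReal.ofNat_ne_top] at hmem
  rcases hmem with h0 | hfin
  · rw [hconst, h0]; rfl
  · exact absurd hfin (by simp)

section Dilation

variable (φ : H1) {σ : ℝ} (hσ : 0 < σ)

lemma gradSq_dilate : gradSq (φ.dilate hσ) = σ⁻¹ * gradSq φ := by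
  have hnorm : ∀ x, ‖(φ.dilate hσ).dx x‖ ^ 2 = (σ⁻¹) ^ 2 * ‖φ.dx (x / σ)‖ ^ 2 := fun x => by
    simp [dilate, abs_of_pos hσ, mul_pow]
  simp only [gradSq, hnorm, integral_const_mul, Measure.integral_comp_div (fun x => ‖φ.dx x‖ ^ 2),
    abs_of_pos hσ, smul_eq_mul]
  field_simp

lemma massSq_dilate : massSq (φ.dilate hσ) = σ * massSq φ := by
  simp only [massSq, dilate_toFun, Measure.integral_comp_div (fun x => ‖φ.toFun x‖ ^ 2),
    abs_of_pos hσ, smul_eq_mul]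

lemma lpPow_dilate (p : ℝ) : lpPow p (φ.dilate hσ) = σ * lpPow p φ := by
  simp only [lpPow, dilate_toFun, Measure.integral_comp_div (fun x => ‖φ.toFun x‖ ^ (p + 1)),
    abs_of_pos hσ, smul_eq_mul]

end Dilation

def AdmissiblePair (α β : ℝ) : Prop := 0 < α ∧ 0 ≤ 2 * α - β ∧ 0 ≤ 2 * α + β

lemma AdmissiblePair.convexComb {a b a' b' θ : ℝ} (h : AdmissiblePair a b)
    (h' : AdmissiblePair a' b') (hθ₀ : 0 ≤ θ) (hθ₁ : θ ≤ 1) :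
    AdmissiblePair ((1 - θ) * a + θ * a') ((1 - θ) * b + θ * b') := by
  obtain ⟨ha, hs, ht⟩ := h
  obtain ⟨ha', hs', ht'⟩ := h'
  have hθ₁' : 0 ≤ 1 - θ := by linarith
  refine ⟨?_, ?_, ?_⟩
  · rcases hθ₀.eq_or_lt with rfl | hθ
    · simpa using ha
    · nlinarith [mul_nonneg hθ₁' ha.le, mul_pos hθ ha']
  · nlinarith [mul_nonneg hθ₁' hs, mul_nonneg hθ₀ hs']
  · nlinarith [mul_nonneg hθ₁' ht, mul_nonneg hθ₀ ht']

section Functionals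

variable {p ω γ : ℝ}

lemma Kfun_convexComb (a b a' b' θ : ℝ) (φ : H1) :
    Kfun p ω γ ((1 - θ) * a + θ * a') ((1 - θ) * b + θ * b') φ
      = (1 - θ) * Kfun p ω γ a b φ + θ * Kfun p ω γ a' b' φ := by
  unfold Kfun
  ring

lemma exists_admissiblePair_Kfun_eq_zero {a b a' b' : ℝ} (h : AdmissiblePair a b)
    (h' : AdmissiblePair a' b') {φ : H1} (hK : 0 ≤ Kfun p ω γ a b φ)
    (hK' : Kfun p ω γ a' b' φ < 0) :
    ∃ A B, AdmissiblePair A B ∧ Kfun p ω γ A B φ = 0 := by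
  have hgap : 0 < Kfun p ω γ a b φ - Kfun p ω γ a' b' φ := by linarith
  set θ := Kfun p ω γ a b φ / (Kfun p ω γ a b φ - Kfun p ω γ a' b' φ)
  have hθ₁ : θ ≤ 1 := (div_le_one hgap).2 (by linarith)
  refine ⟨_, _, h.convexComb h' (div_nonneg hK hgap.le) hθ₁, ?_⟩
  rw [Kfun_convexComb]
  field_simp
  ring

lemma Kfun_nonneg_of_toFun_eq_zero (hp : -1 < p) {α β : ℝ} (hαβ : 0 ≤ 2 * α - β) {φ : H1}
    (hφ : φ.toFun = 0) : 0 ≤ Kfun p ω γ α β φ := by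
  have hm : massSq φ = 0 := by simp [massSq, hφ]
  have hL : lpPow p φ = 0 := by simp [lpPow, hφ, Real.zero_rpow (by linarith : p + 1 ≠ 0)]
  simp only [Kfun, hm, hL, hφ, Pi.zero_apply, norm_zero]
  have := gradSq_nonneg φ
  nlinarith

lemma lpPow_pos_of_Kfun_eq_zero (hp : 1 ≤ p) (hγ : γ ≤ 0) (hω : 0 < ω) {A B : ℝ}
    (hAB : AdmissiblePair A B) {φ : H1} (hφ : φ.toFun ≠ 0) (hK : Kfun p ω γ A B φ = 0) :
    0 < lpPow p φ := by
  obtain ⟨hA, hs, ht⟩ := hAB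
  by_contra! hL
  have hG := gradSq_pos hφ
  have hM := massSq_pos hφ
  have hq : 0 ≤ -γ * A * ‖φ.toFun 0‖ ^ 2 := by
    have := neg_nonneg.2 hγ
    positivity
  have hcoef : 0 ≤ ((p + 1) * A + B) / (p + 1) := div_nonneg (by nlinarith) (by linarith)
  have hquad : 0 < (2 * A - B) / 4 * gradSq φ + ω * (2 * A + B) / 2 * massSq φ := by
    rcases hs.eq_or_lt with hs0 | hs0
    · nlinarith [mul_pos (mul_pos hω (by linarith : 0 < 2 * A + B)) hM]
    · nlinarith [mul_pos hs0 hG, mul_nonneg (mul_nonneg hω.le ht) hM.le]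
  unfold Kfun at hK
  nlinarith [mul_nonpos_of_nonneg_of_nonpos hcoef hL]

lemma exists_dilate_Pfun_eq_zero (hp : 1 < p) {φ : H1} (hG : 0 < gradSq φ)
    (hL : 0 < lpPow p φ) : ∃ σ, ∃ hσ : 0 < σ, Pfun p γ (φ.dilate hσ) = 0 := by
  obtain ⟨σ, hσ, hroot⟩ := exists_pos_mul_sq_eq_mul_add
    (mul_pos (by linarith : 0 < p - 1) hL) (mul_pos hG (by linarith : 0 < p + 1))
    (-(γ * ‖φ.toFun 0‖ ^ 2 * (p + 1)))
  refine ⟨σ, hσ, ?_⟩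
  have hp1 : p + 1 ≠ 0 := by linarith
  simp only [Pfun, gradSq_dilate, lpPow_dilate, dilate_toFun, zero_div]
  field_simp
  linear_combination -hroot

lemma Sfun_dilate_le (hp : 1 < p) {A B : ℝ} (hAB : AdmissiblePair A B) {φ : H1}
    (hL : 0 < lpPow p φ) (hK : Kfun p ω γ A B φ = 0) {σ : ℝ} (hσ : 0 < σ)
    (hP : Pfun p γ (φ.dilate hσ) = 0) : Sfun p ω γ (φ.dilate hσ) ≤ Sfun p ω γ φ := by
  obtain ⟨hA, hs, ht⟩ := hAB
  have hp1 : p + 1 ≠ 0 := by linarith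
  simp only [Pfun, gradSq_dilate, lpPow_dilate, dilate_toFun, zero_div] at hP
  simp only [Kfun] at hK
  field_simp at hK hP
  set g := gradSq φ
  set m := massSq φ
  set q := ‖φ.toFun 0‖ ^ 2
  set L := lpPow p φ
  set W := 2 * ω * m * σ * (p + 1) - g * (p + 1) - 4 * σ * L
  have hdiff : (Sfun p ω γ φ - Sfun p ω γ (φ.dilate hσ)) * (4 * σ * (p + 1)) = (1 - σ) * W := by
    simp only [Sfun, gradSq_dilate, massSq_dilate, lpPow_dilate, dilate_toFun, zero_div]
    field_simp
    ring
  set Y := (2 * A - B) * g * (p + 1) + 4 * (p - 1) * A * σ * L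
  have hY : 0 < Y := by
    have : 0 < p - 1 := by linarith
    exact add_pos_of_nonneg_of_pos
      (mul_nonneg (mul_nonneg hs (gradSq_nonneg φ)) (by linarith)) (by positivity)
  have hWY : (2 * A + B) * W = (1 - σ) * Y := by
    linear_combination σ / 2 * hK - 4 * A * hP
  have hsign : 0 ≤ (1 - σ) * W := by
    rcases ht.eq_or_lt with ht0 | ht0
    · rw [← ht0, zero_mul, eq_comm, mul_eq_zero] at hWY
      rcases hWY with h | h
      · simp [h]
      · exact absurd h hY.ne'
    · refine nonneg_of_mul_nonneg_right ?_ ht0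
      rw [mul_left_comm, hWY, ← mul_assoc]
      exact mul_nonneg (mul_self_nonneg _) hY.le
  have h4 : 0 < 4 * σ * (p + 1) := by positivity
  nlinarith

lemma Sfun_nonneg_of_Pfun_eq_zero (hp : 5 ≤ p) (hγ : γ ≤ 0) (hω : 0 ≤ ω) {φ : H1}
    (hP : Pfun p γ φ = 0) : 0 ≤ Sfun p ω γ φ := by
  have hp1 : p + 1 ≠ 0 := by linarith
  have hvirial : (p - 1) * Sfun p ω γ φ - 2 * Pfun p γ φ
      = (p - 5) / 4 * gradSq φ - γ * (p - 3) / 2 * ‖φ.toFun 0‖ ^ 2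
        + ω * (p - 1) / 2 * massSq φ := by
    simp only [Sfun, Pfun]
    field_simp
    ring
  have hG := gradSq_nonneg φ
  have hM := massSq_nonneg φ
  have hq : 0 ≤ -γ * (p - 3) / 2 * ‖φ.toFun 0‖ ^ 2 := by
    have := neg_nonneg.2 hγ
    have : 0 ≤ p - 3 := by linarith
    positivity
  rw [hP, mul_zero, sub_zero] at hvirial
  have : 0 ≤ (p - 1) * Sfun p ω γ φ := by
    rw [hvirial]
    nlinarith [mul_nonneg (by linarith : 0 ≤ (p - 5) / 4) hG,
      mul_nonneg (by nlinarith : 0 ≤ ω * (p - 1) / 2) hM]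
  exact nonneg_of_mul_nonneg_right this (by linarith)

lemma nOmega_le_Sfun (hp : 5 ≤ p) (hγ : γ ≤ 0) (hω : 0 ≤ ω) {φ : H1} (hφ : φ.toFun ≠ 0)
    (hP : Pfun p γ φ = 0) : nOmega p γ ω ≤ Sfun p ω γ φ :=
  csInf_le ⟨0, by rintro _ ⟨ψ, -, hψ, rfl⟩; exact Sfun_nonneg_of_Pfun_eq_zero hp hγ hω hψ⟩
    ⟨φ, hφ, hP, rfl⟩

lemma rOmega_le_Sfun (hp : 5 ≤ p) (hγ : γ ≤ 0) (hω : 0 ≤ ω) {φ : H1} (hφ : φ.toFun ≠ 0)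
    (heven : ∀ x, φ.toFun (-x) = φ.toFun x) (hP : Pfun p γ φ = 0) :
    rOmega p γ ω ≤ Sfun p ω γ φ :=
  csInf_le ⟨0, by rintro _ ⟨ψ, -, -, hψ, rfl⟩; exact Sfun_nonneg_of_Pfun_eq_zero hp hγ hω hψ⟩
    ⟨φ, hφ, heven, hP, rfl⟩

lemma exists_dilate_Pfun_eq_zero_Sfun_le (hp : 1 < p) (hγ : γ ≤ 0) (hω : 0 < ω)
    {a b a' b' : ℝ} (h : AdmissiblePair a b) (h' : AdmissiblePair a' b') {φ : H1}
    (hK : 0 ≤ Kfun p ω γ a b φ) (hK' : Kfun p ω γ a' b' φ < 0) :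
    ∃ σ, ∃ hσ : 0 < σ, (φ.dilate hσ).toFun ≠ 0 ∧ Pfun p γ (φ.dilate hσ) = 0 ∧
      Sfun p ω γ (φ.dilate hσ) ≤ Sfun p ω γ φ := by
  have hφ : φ.toFun ≠ 0 := fun h0 =>
    hK'.not_ge (Kfun_nonneg_of_toFun_eq_zero (by linarith) h'.2.1 h0)
  obtain ⟨A, B, hAB, hK₀⟩ := exists_admissiblePair_Kfun_eq_zero h h' hK hK'
  have hL := lpPow_pos_of_Kfun_eq_zero hp.le hγ hω hAB hφ hK₀
  obtain ⟨σ, hσ, hP⟩ := exists_dilate_Pfun_eq_zero hp (gradSq_pos hφ) hL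
  exact ⟨σ, hσ, dilate_toFun_ne_zero hσ hφ, hP, Sfun_dilate_le hp hAB hL hK₀ hσ hP⟩

lemma Kfun_nonneg_iff_of_Sfun_lt (hp : 1 < p) (hγ : γ ≤ 0) (hω : 0 < ω) {a b a' b' : ℝ}
    (h : AdmissiblePair a b) (h' : AdmissiblePair a' b') {φ : H1} {n : ℝ}
    (hn : ∀ σ (hσ : 0 < σ), (φ.dilate hσ).toFun ≠ 0 → Pfun p γ (φ.dilate hσ) = 0 →
      n ≤ Sfun p ω γ (φ.dilate hσ))
    (hS : Sfun p ω γ φ < n) : 0 ≤ Kfun p ω γ a b φ ↔ 0 ≤ Kfun p ω γ a' b' φ := by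
  have sign_stable : ∀ {a b a' b'}, AdmissiblePair a b → AdmissiblePair a' b' →
      0 ≤ Kfun p ω γ a b φ → 0 ≤ Kfun p ω γ a' b' φ := fun h h' hK => by
    by_contra! hK'
    obtain ⟨σ, hσ, hφσ, hP, hle⟩ := exists_dilate_Pfun_eq_zero_Sfun_le hp hγ hω h h' hK hK'
    linarith [hn σ hσ hφσ hP]
  exact ⟨sign_stable h h', sign_stable h' h⟩

end Functionals

/-- below `n_ω` (resp. below `r_ω` for even functions), the sign of
`K^{α,β}_{ω,γ}` does not depend on the admissible pair `(α,β)`. -/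
theorem K_sign_independent (p γ ω α β α' β' : ℝ) (hp : 5 < p) (hγ : γ < 0) (hω : 0 < ω)
    (hα : 0 < α) (hβ1 : 0 ≤ 2*α - β) (hβ2 : 0 ≤ 2*α + β)
    (hα' : 0 < α') (hβ1' : 0 ≤ 2*α' - β') (hβ2' : 0 ≤ 2*α' + β') :
    (∀ φ : H1, Sfun p ω γ φ < nOmega p γ ω →
      (0 ≤ Kfun p ω γ α β φ ↔ 0 ≤ Kfun p ω γ α' β' φ)) ∧
    (∀ φ : H1, (∀ x, φ.toFun (-x) = φ.toFun x) → Sfun p ω γ φ < rOmega p γ ω →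
      (0 ≤ Kfun p ω γ α β φ ↔ 0 ≤ Kfun p ω γ α' β' φ)) := by
  have h : AdmissiblePair α β := ⟨hα, hβ1, hβ2⟩
  have h' : AdmissiblePair α' β' := ⟨hα', hβ1', hβ2'⟩
  have hp1 : 1 < p := by linarith
  refine ⟨fun φ hS => Kfun_nonneg_iff_of_Sfun_lt hp1 hγ.le hω h h' ?_ hS,
    fun φ heven hS => Kfun_nonneg_iff_of_Sfun_lt hp1 hγ.le hω h h' ?_ hS⟩
  · exact fun σ hσ hφ hP => nOmega_le_Sfun hp.le hγ.le hω.le hφ hP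
  · refine fun σ hσ hφ hP => rOmega_le_Sfun hp.le hγ.le hω.le hφ (fun x => ?_) hP
    simp only [dilate_toFun, neg_div, heven]
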